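/- In any FNHT, the collection consisting of the sets l_r(v) for all nodes v with l_r(v) ≠ ∅, together with the sets l_p(v) for all leaf natural children v with l_p(v) ≠ ∅, is a family of pairwise disjoint nonempty subsets of Q; hence there are at most |Q| valid markers. -/
import Mathlib


open Classical

/-- Nodes: finite sequences over `ℕ ∪ {𝔰}`; `none` denotes the stepchild symbol `𝔰`. -/
abbrev FNHTNode := List (Option ℕ)

/-- A node is a stepchild if it is the root or ends in `𝔰`. -/
def isStep (v : FNHTNode) : Prop := v = [] ∨ ∃ w : FNHTNode, v = w ++ [none]

/-- A node is a natural child if it ends in a natural number. -/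
def isNat (v : FNHTNode) : Prop := ∃ (w : FNHTNode) (c : ℕ), v = w ++ [some c]

/-- Flattened nested history trees over a finite state set `Q` with maximal priority `π`
(maximal even priority `πe = π` if `π` is even, else `π - 1`). -/
structure FNHT (Q : Type) [Fintype Q] [DecidableEq Q] (π : ℕ) where
  /-- the ordered tree -/
  T : Finset FNHTNode
  /-- states of a node -/
  ls : FNHTNode → Finset Q
  /-- pure states of a node -/
  lp : FNHTNode → Finset Q
  /-- recurrent states of a node -/
  lr : FNHTNode → Finset Q
  root_mem : [] ∈ T
  prefix_closed : ∀ v w : FNHTNode, v <+: w → w ∈ T → v ∈ T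
  order_closed : ∀ (v : FNHTNode) (c c' : ℕ), c < c' → v ++ [some c'] ∈ T →
    v ++ [some c] ∈ T
  /-- stepchildren have only natural children -/
  step_children : ∀ v ∈ T, ∀ x, isStep v → v ++ [x] ∈ T → x ≠ none
  /-- natural children have only stepchildren -/
  nat_children : ∀ v ∈ T, ∀ x, isNat v → v ++ [x] ∈ T → x = none
  /-- only natural children and, when `π` is odd, the root may be leaves -/
  leaf_constraint : ∀ v ∈ T, isStep v → (v = [] → Even π → ∃ x, v ++ [x] ∈ T) ∧
    (v ≠ [] → ∃ x, v ++ [x] ∈ T)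
  ls_nonempty : ∀ v ∈ T, (ls v).Nonempty
  lp_step : ∀ v ∈ T, isStep v → lp v = ∅
  step_union : ∀ v ∈ T, isStep v →
    ls v = lr v ∪ (T.filter (fun w => ∃ c : ℕ, w = v ++ [some c])).biUnion ls
  step_disj_children : ∀ v ∈ T, isStep v → ∀ c c' : ℕ, c ≠ c' →
    v ++ [some c] ∈ T → v ++ [some c'] ∈ T →
    Disjoint (ls (v ++ [some c])) (ls (v ++ [some c']))
  step_disj_lr : ∀ v ∈ T, isStep v → ∀ c : ℕ, v ++ [some c] ∈ T →
    Disjoint (lr v) (ls (v ++ [some c]))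
  nat_lp_nonempty : ∀ v ∈ T, isNat v → (lp v).Nonempty
  nat_union : ∀ v ∈ T, isNat v → ls v = lp v ∪ lr v ∧ Disjoint (lp v) (lr v)
  nat_stepchild : ∀ v ∈ T, isNat v → v ++ [none] ∈ T → ls (v ++ [none]) = lp v
  level_ge : ∀ v ∈ T, 2 ≤ (if Even π then π else π - 1) - 2 * v.count none

/-- An FNHT is full if the root carries all states. -/
def FNHT.full {Q : Type} [Fintype Q] [DecidableEq Q] {π : ℕ} (t : FNHT Q π) : Prop :=
  t.ls [] = Finset.univ

/-- `v` is a leaf of the tree. -/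
def FNHT.isLeaf {Q : Type} [Fintype Q] [DecidableEq Q] {π : ℕ} (t : FNHT Q π)
    (v : FNHTNode) : Prop := ∀ x, v ++ [x] ∉ t.T

open scoped Classical in
/-- The valid markers of an FNHT: `(v, true)` stands for `(v, r)` with `l_r v ≠ ∅`,
and `(v, false)` for `(v, p)` with `v` a leaf natural child and `l_p v ≠ ∅`. -/
noncomputable def FNHT.markers {Q : Type} [Fintype Q] [DecidableEq Q] {π : ℕ}
    (t : FNHT Q π) : Finset (FNHTNode × Bool) :=
  (t.T ×ˢ (Finset.univ : Finset Bool)).filter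
    (fun p => if p.2 then (t.lr p.1).Nonempty else (t.isLeaf p.1 ∧ (t.lp p.1).Nonempty))

/-- The subset of `Q` associated with a marker. -/
def FNHT.msetOf {Q : Type} [Fintype Q] [DecidableEq Q] {π : ℕ} (t : FNHT Q π)
    (p : FNHTNode × Bool) : Finset Q := if p.2 then t.lr p.1 else t.lp p.1


section Aux

variable {Q : Type} [Fintype Q] [DecidableEq Q] {π : ℕ} (t : FNHT Q π)

lemma step_or_nat (v : FNHTNode) : isStep v ∨ isNat v := by
  rcases List.eq_nil_or_concat v with rfl | ⟨w, x, rfl⟩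
  · exact Or.inl (Or.inl rfl)
  · cases x with
    | none => exact Or.inl (Or.inr ⟨w, by simp⟩)
    | some c => exact Or.inr ⟨w, c, by simp⟩

lemma FNHT.lr_subset_ls {v : FNHTNode} (hv : v ∈ t.T) : t.lr v ⊆ t.ls v := by
  rcases step_or_nat v with h | h
  · rw [t.step_union v hv h]; exact Finset.subset_union_left
  · rw [(t.nat_union v hv h).1]; exact Finset.subset_union_right

lemma FNHT.lp_subset_ls {v : FNHTNode} (hv : v ∈ t.T) : t.lp v ⊆ t.ls v := by
  rcases step_or_nat v with h | h
  · rw [t.lp_step v hv h]; exact Finset.empty_subset _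
  · rw [(t.nat_union v hv h).1]; exact Finset.subset_union_left

lemma FNHT.lp_disj_lr {v : FNHTNode} (hv : v ∈ t.T) : Disjoint (t.lp v) (t.lr v) := by
  rcases step_or_nat v with h | h
  · rw [t.lp_step v hv h]; exact Finset.disjoint_empty_left _
  · exact (t.nat_union v hv h).2

lemma FNHT.child_mem {v : FNHTNode} {x : Option ℕ} (h : v ++ [x] ∈ t.T) : v ∈ t.T :=
  t.prefix_closed v (v ++ [x]) ⟨[x], rfl⟩ h

lemma FNHT.ls_child_subset {v : FNHTNode} {x : Option ℕ} (h : v ++ [x] ∈ t.T) :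
    t.ls (v ++ [x]) ⊆ t.ls v := by
  have hv : v ∈ t.T := t.child_mem h
  rcases step_or_nat v with hs | hn
  · rcases x with _ | c
    · exact absurd rfl (t.step_children v hv none hs h)
    · rw [t.step_union v hv hs]
      refine Finset.Subset.trans ?_ Finset.subset_union_right
      exact Finset.subset_biUnion_of_mem _ (Finset.mem_filter.2 ⟨h, ⟨c, rfl⟩⟩)
  · have hx : x = none := t.nat_children v hv x hn h
    subst hx
    rw [t.nat_stepchild v hv hn h]
    exact t.lp_subset_ls hv

lemma FNHT.ls_anti {v w : FNHTNode} (hp : v <+: w) (hw : w ∈ t.T) : t.ls w ⊆ t.ls v := by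
  obtain ⟨s, rfl⟩ := hp
  induction s using List.reverseRecOn generalizing v with
  | nil => simp
  | append_singleton s x ih =>
    rw [← List.append_assoc] at hw ⊢
    exact Finset.Subset.trans (t.ls_child_subset hw) (ih (t.child_mem hw))

lemma FNHT.lr_disj_child {v : FNHTNode} {x : Option ℕ} (h : v ++ [x] ∈ t.T) :
    Disjoint (t.lr v) (t.ls (v ++ [x])) := by
  have hv : v ∈ t.T := t.child_mem h
  rcases step_or_nat v with hs | hn
  · rcases x with _ | c
    · exact absurd rfl (t.step_children v hv none hs h)
    · exact t.step_disj_lr v hv hs c h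
  · have hx : x = none := t.nat_children v hv x hn h
    subst hx
    rw [t.nat_stepchild v hv hn h]
    exact (t.lp_disj_lr hv).symm

lemma FNHT.children_disj {u : FNHTNode} {x y : Option ℕ} (hxy : x ≠ y)
    (hx : u ++ [x] ∈ t.T) (hy : u ++ [y] ∈ t.T) :
    Disjoint (t.ls (u ++ [x])) (t.ls (u ++ [y])) := by
  have hu : u ∈ t.T := t.child_mem hx
  rcases step_or_nat u with hs | hn
  · rcases x with _ | c
    · exact absurd rfl (t.step_children u hu none hs hx)
    · rcases y with _ | c'
      · exact absurd rfl (t.step_children u hu none hs hy)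
      · have : c ≠ c' := fun h => hxy (by rw [h])
        exact t.step_disj_children u hu hs c c' this hx hy
  · have h1 : x = none := t.nat_children u hu x hn hx
    have h2 : y = none := t.nat_children u hu y hn hy
    exact absurd (h1.trans h2.symm) hxy

lemma diverge : ∀ (v w : FNHTNode), ¬ v <+: w → ¬ w <+: v →
    ∃ (u : FNHTNode) (a b : Option ℕ), a ≠ b ∧ (u ++ [a]) <+: v ∧ (u ++ [b]) <+: w := by
  intro v
  induction v with
  | nil => intro w h _; exact absurd (List.nil_prefix) h
  | cons a v ih =>
    intro w h1 h2
    cases w with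
    | nil => exact absurd (List.nil_prefix) h2
    | cons b w =>
      by_cases hab : a = b
      · subst hab
        have h1' : ¬ v <+: w := fun h => h1 (List.cons_prefix_cons.2 ⟨rfl, h⟩)
        have h2' : ¬ w <+: v := fun h => h2 (List.cons_prefix_cons.2 ⟨rfl, h⟩)
        obtain ⟨u, x, y, hxy, hx, hy⟩ := ih w h1' h2'
        exact ⟨a :: u, x, y, hxy, List.cons_prefix_cons.2 ⟨rfl, hx⟩,
          List.cons_prefix_cons.2 ⟨rfl, hy⟩⟩
      · exact ⟨[], a, b, hab, ⟨v, rfl⟩, ⟨w, rfl⟩⟩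

lemma FNHT.mem_markers {p : FNHTNode × Bool} (hp : p ∈ t.markers) :
    p.1 ∈ t.T ∧ (if p.2 then (t.lr p.1).Nonempty
      else (t.isLeaf p.1 ∧ (t.lp p.1).Nonempty)) := by
  have := Finset.mem_filter.1 hp
  exact ⟨(Finset.mem_product.1 this.1).1, this.2⟩

lemma FNHT.msetOf_subset_ls {p : FNHTNode × Bool} (hp : p ∈ t.markers) :
    t.msetOf p ⊆ t.ls p.1 := by
  have h1 := (t.mem_markers hp).1
  unfold FNHT.msetOf
  cases p.2 <;> simp only [if_true, if_false, Bool.false_eq_true]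
  · exact t.lp_subset_ls h1
  · exact t.lr_subset_ls h1

lemma FNHT.msetOf_nonempty {p : FNHTNode × Bool} (hp : p ∈ t.markers) :
    (t.msetOf p).Nonempty := by
  have h2 := (t.mem_markers hp).2
  unfold FNHT.msetOf
  cases hb : p.2 <;> rw [hb] at h2 <;>
    simp only [if_true, if_false, Bool.false_eq_true] at h2 ⊢
  · exact h2.2
  · exact h2

end Aux

/-- The sets `l_r v` (for `l_r v ≠ ∅`) together with the sets `l_p v` of leaves (for
`l_p v ≠ ∅`) form a family of pairwise disjoint nonempty subsets of `Q`; hence there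
are at most `|Q|` valid markers. -/
theorem fnht_markers_disjoint_and_card
    {Q : Type} [Fintype Q] [DecidableEq Q] {π : ℕ} (t : FNHT Q π) :
    (∀ p ∈ t.markers, ∀ q ∈ t.markers, p ≠ q → Disjoint (t.msetOf p) (t.msetOf q)) ∧
    (∀ p ∈ t.markers, (t.msetOf p).Nonempty) ∧
    t.markers.card ≤ Fintype.card Q := by
  have hdisj : ∀ p ∈ t.markers, ∀ q ∈ t.markers, p ≠ q →
      Disjoint (t.msetOf p) (t.msetOf q) := by
    intro p hp q hq hpq
    obtain ⟨hv, hpc⟩ := t.mem_markers hp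
    obtain ⟨hw, hqc⟩ := t.mem_markers hq
    by_cases hvw : p.1 = q.1
    · -- same node, different bool
      have hb : p.2 ≠ q.2 := by
        intro h; exact hpq (Prod.ext hvw h)
      unfold FNHT.msetOf
      rw [hvw]
      cases hp2 : p.2 <;> cases hq2 : q.2 <;> simp_all
      · exact (t.lp_disj_lr hw)
      · exact (t.lp_disj_lr hw).symm
    · -- different nodes
      by_cases h1 : p.1 <+: q.1
      · -- p.1 strict prefix of q.1
        obtain ⟨s, hs⟩ := h1
        cases s with
        | nil => exact absurd (by simpa using hs) hvw
        | cons x s' =>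
          have hchild : p.1 ++ [x] ∈ t.T := by
            refine t.prefix_closed _ q.1 ⟨s', ?_⟩ hw
            simpa using hs
          have hp2 : p.2 = true := by
            by_contra h
            rw [Bool.not_eq_true] at h
            rw [h] at hpc
            simp only [if_false, Bool.false_eq_true] at hpc
            exact hpc.1 x hchild
          have hm : t.msetOf p = t.lr p.1 := by unfold FNHT.msetOf; rw [hp2]; simp
          rw [hm]
          refine Disjoint.mono_right ?_ (t.lr_disj_child hchild)
          refine Finset.Subset.trans (t.msetOf_subset_ls hq) (t.ls_anti ⟨s', ?_⟩ hw)
          simpa using hs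
      · by_cases h2 : q.1 <+: p.1
        · obtain ⟨s, hs⟩ := h2
          cases s with
          | nil => exact absurd ((by simpa using hs : q.1 = p.1)).symm hvw
          | cons x s' =>
            have hchild : q.1 ++ [x] ∈ t.T := by
              refine t.prefix_closed _ p.1 ⟨s', ?_⟩ hv
              simpa using hs
            have hq2 : q.2 = true := by
              by_contra h
              rw [Bool.not_eq_true] at h
              rw [h] at hqc
              simp only [if_false, Bool.false_eq_true] at hqc
              exact hqc.1 x hchild
            have hm : t.msetOf q = t.lr q.1 := by unfold FNHT.msetOf; rw [hq2]; simp
            rw [hm]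
            refine Disjoint.symm ?_
            refine Disjoint.mono_right ?_ (t.lr_disj_child hchild)
            refine Finset.Subset.trans (t.msetOf_subset_ls hp) (t.ls_anti ⟨s', ?_⟩ hv)
            simpa using hs
        · obtain ⟨u, a, b, hab, ha, hb⟩ := diverge p.1 q.1 h1 h2
          have hau : u ++ [a] ∈ t.T := t.prefix_closed _ p.1 ha hv
          have hbu : u ++ [b] ∈ t.T := t.prefix_closed _ q.1 hb hw
          refine Disjoint.mono ?_ ?_ (t.children_disj hab hau hbu)
          · exact Finset.Subset.trans (t.msetOf_subset_ls hp) (t.ls_anti ha hv)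
          · exact Finset.Subset.trans (t.msetOf_subset_ls hq) (t.ls_anti hb hw)
  refine ⟨hdisj, fun p hp => t.msetOf_nonempty hp, ?_⟩
  classical
  calc t.markers.card = ∑ _p ∈ t.markers, 1 := by simp
    _ ≤ ∑ p ∈ t.markers, (t.msetOf p).card := by
        refine Finset.sum_le_sum fun p hp => ?_
        exact Finset.card_pos.2 (t.msetOf_nonempty hp)
    _ = (t.markers.biUnion t.msetOf).card :=
        (Finset.card_biUnion (fun p hp q hq h => hdisj p hp q hq h)).symm
    _ ≤ Fintype.card Q := by
        rw [← Finset.card_univ]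
        exact Finset.card_le_card (Finset.subset_univ _)
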